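/- Let G be a d × d symmetric positive definite real matrix and B a skew-symmetric d × d real matrix. Then the generalized metric H = [[G − B·G⁻¹·B, B·G⁻¹], [−G⁻¹·B, G⁻¹]] is positive definite. -/

import Mathlib

/-!
With `P = [[1, 0], [-B, 1]]`, skewness of `B` gives `Pᵀ = [[1, B], [0, 1]]`, and multiplying out
shows `H = Pᵀ · diag(G, G⁻¹) · P`. Since `P` is invertible and `diag(G, G⁻¹)` is positive
definite, so is its congruence `H`.
-/

open Matrix

namespace Matrix

variable {m n R : Type*}

theorem PosDef.fromBlocks_zero [Fintype m] [Fintype n] [Ring R] [PartialOrder R] [StarRing R]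
    [StarOrderedRing R] {A : Matrix m m R} {D : Matrix n n R} (hA : A.PosDef) (hD : D.PosDef) :
    (fromBlocks A 0 0 D).PosDef := by
  refine .of_dotProduct_mulVec_pos (hA.1.fromBlocks (by simp) hD.1) fun x hx => ?_
  have hsplit : star x ⬝ᵥ (fromBlocks A 0 0 D *ᵥ x) =
      star (x ∘ Sum.inl) ⬝ᵥ (A *ᵥ (x ∘ Sum.inl)) +
        star (x ∘ Sum.inr) ⬝ᵥ (D *ᵥ (x ∘ Sum.inr)) := by
    simp [fromBlocks_mulVec, dotProduct, Fintype.sum_sum_type]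
  have hA0 := hA.posSemidef.dotProduct_mulVec_nonneg (x ∘ Sum.inl)
  have hD0 := hD.posSemidef.dotProduct_mulVec_nonneg (x ∘ Sum.inr)
  rw [hsplit]
  by_cases hl : x ∘ Sum.inl = 0
  · have hr : x ∘ Sum.inr ≠ 0 := fun hr => hx <| funext <| Sum.rec (congrFun hl) (congrFun hr)
    exact add_pos_of_nonneg_of_pos hA0 (hD.dotProduct_mulVec_pos hr)
  · exact add_pos_of_pos_of_nonneg (hA.dotProduct_mulVec_pos hl) hD0

theorem fromBlocks_one_mul_fromBlocks_zero_mul_fromBlocks_one [Fintype n] [DecidableEq n] [Ring R]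
    (G K B : Matrix n n R) :
    fromBlocks 1 B 0 1 * fromBlocks G 0 0 K * fromBlocks 1 0 (-B) 1 =
      fromBlocks (G - B * K * B) (B * K) (-(K * B)) K := by
  simp [fromBlocks_multiply, Matrix.mul_assoc, sub_eq_add_neg]

end Matrix

/-- The T-fold generalized metric
`H = [[G − B G⁻¹ B, B G⁻¹], [−G⁻¹ B, G⁻¹]]` built from a symmetric positive
definite `G` and a skew-symmetric `B` is positive definite. -/
theorem stmt_7 (d : ℕ) (G B : Matrix (Fin d) (Fin d) ℝ)
    (hG : G.PosDef) (hB : Bᵀ = -B) :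
    (Matrix.fromBlocks (G - B * G⁻¹ * B) (B * G⁻¹) (-(G⁻¹ * B)) G⁻¹).PosDef := by
  set P : Matrix (Fin d ⊕ Fin d) (Fin d ⊕ Fin d) ℝ := fromBlocks 1 0 (-B) 1
  have hP : IsUnit P := isUnit_fromBlocks_zero₁₂.2 ⟨isUnit_one, isUnit_one⟩
  have hPH : Pᴴ = fromBlocks 1 B 0 1 := by
    rw [conjTranspose_eq_transpose_of_trivial, fromBlocks_transpose]
    simp [hB]
  rw [← fromBlocks_one_mul_fromBlocks_zero_mul_fromBlocks_one, ← hPH]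
  exact (hG.fromBlocks_zero hG.inv).conjTranspose_mul_mul_same (mulVec_injective_iff_isUnit.2 hP)
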